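/- arXiv:0910.4376 — 2 statements merged into one kernel-verified Lean document; each statement's English description precedes it below -/
import Mathlib

section
/- Let Γ be a finite simple graph that is the union of two subgraphs Γ_1 and Γ_2 joined by a bridge e. Then κ(Γ) = κ(Γ_1)·κ(Γ_2), where κ denotes the number of click-equivalence classes of acyclic orientations. -/
variable {V : Type*}

/-- An acyclic orientation of a simple graph `G`. -/
structure AcyclicOrientation (G : SimpleGraph V) where
  dir : V → V → Prop
  dir_adj : ∀ {a b : V}, dir a b → G.Adj a b
  total : ∀ {a b : V}, G.Adj a b → dir a b ∨ dir b a
  acyclic : ∀ a : V, ¬ Relation.TransGen dir a a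

namespace AcyclicOrientation

variable {G : SimpleGraph V}

/-- `v` is a source: no edge points into `v`. -/
def IsSource (O : AcyclicOrientation G) (v : V) : Prop := ∀ a, ¬ O.dir a v

/-- `O'` is obtained from `O` by converting the source `v` into a sink. -/
def ClickAt (O : AcyclicOrientation G) (v : V) (O' : AcyclicOrientation G) : Prop :=
  O.IsSource v ∧ ∀ a b, (O'.dir a b ↔ (((a = v ∨ b = v) ∧ O.dir b a) ∨ (a ≠ v ∧ b ≠ v ∧ O.dir a b)))

/-- One source-to-sink conversion relates `O` and `O'`. -/
def IsClick (O O' : AcyclicOrientation G) : Prop := ∃ v, O.ClickAt v O'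

/-- Click-equivalence: reachability by a finite sequence of clicks. -/
def ClickEquiv (O O' : AcyclicOrientation G) : Prop :=
  Relation.ReflTransGen IsClick O O'

/-- `ClickSeq O c O'` : the list `c` is a click-sequence applicable to `O` with result `O'`. -/
inductive ClickSeq : AcyclicOrientation G → List V → AcyclicOrientation G → Prop
  | nil (O : AcyclicOrientation G) : ClickSeq O [] O
  | cons {O O' O'' : AcyclicOrientation G} {v : V} {c : List V} :
      O.ClickAt v O' → ClickSeq O' c O'' → ClickSeq O (v :: c) O''

open scoped Classical in
/-- `ν_P(O)`: forward minus backward edges of the closed walk `p` under `O`. -/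
noncomputable def nu (O : AcyclicOrientation G) {u : V} (p : G.Walk u u) : ℤ :=
  (p.darts.map (fun d => if O.dir d.toProd.1 d.toProd.2 then (1 : ℤ) else -1)).sum

/-- The `vw`-interval: vertices on a directed path from `v` to `w`. -/
def interval (O : AcyclicOrientation G) (v w : V) : Set V :=
  {a | Relation.ReflTransGen O.dir v a ∧ Relation.ReflTransGen O.dir a w}

end AcyclicOrientation

open AcyclicOrientation

/-- The setoid of click-equivalence (equivalence relation generated by clicks). -/
def clickSetoid (G : SimpleGraph V) : Setoid (AcyclicOrientation G) :=
  ⟨Relation.EqvGen IsClick, Relation.EqvGen.is_equivalence _⟩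

/-- `κ(G)`: the number of click-equivalence classes of acyclic orientations. -/
noncomputable def kappa (G : SimpleGraph V) : ℕ :=
  Nat.card (Quotient (clickSetoid G))

/-- The graph obtained from `G` by contracting the vertex set `I` to the single vertex `vI ∈ I`
(vertices of `I` other than `vI` become isolated). -/
def contractGraph (G : SimpleGraph V) (I : Set V) (vI : V) : SimpleGraph V where
  Adj a b := a ≠ b ∧
    ((a ∉ I ∧ b ∉ I ∧ G.Adj a b) ∨
     (a = vI ∧ b ∉ I ∧ ∃ x ∈ I, G.Adj x b) ∨
     (b = vI ∧ a ∉ I ∧ ∃ x ∈ I, G.Adj x a))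
  symm := by
    constructor
    rintro a b ⟨hne, h⟩
    refine ⟨hne.symm, ?_⟩
    rcases h with ⟨ha, hb, hadj⟩ | ⟨ha, hb, x, hx, hadj⟩ | ⟨hb, ha, x, hx, hadj⟩
    · exact Or.inl ⟨hb, ha, hadj.symm⟩
    · exact Or.inr (Or.inr ⟨ha, hb, x, hx, hadj⟩)
    · exact Or.inr (Or.inl ⟨hb, ha, x, hx, hadj⟩)
  loopless := by constructor; rintro a ⟨hne, -⟩; exact hne rfl

/-- The orientation of the contracted graph induced by an orientation `O` of `G`. -/
def contractDir {G : SimpleGraph V} (O : AcyclicOrientation G) (I : Set V) (vI : V) :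
    V → V → Prop := fun a b =>
  (a ∉ I ∧ b ∉ I ∧ O.dir a b) ∨
  (a = vI ∧ b ∉ I ∧ ∃ x ∈ I, O.dir x b) ∨
  (b = vI ∧ a ∉ I ∧ ∃ x ∈ I, O.dir a x)

/-- The orientation `i → j` iff `i` precedes `j` in the list `l`. -/
def permDir (G : SimpleGraph V) [DecidableEq V] (l : List V) : V → V → Prop :=
  fun i j => G.Adj i j ∧ l.idxOf i < l.idxOf j

/-!
A click of `Γ` at a vertex of one side restricts to a click of that side and leaves the other
side untouched, so restriction induces a map from click classes of `Γ` to pairs of click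
classes. An orientation of `Γ` is determined by its two restrictions and the direction of the
bridge, and the bridge can be reversed by clicking, source by source, every vertex of the side
it leaves; hence all orientations with the same restrictions are click-equivalent. A source of
`Γ₁` or `Γ₂` becomes a source of `Γ` once the bridge is oriented out of its side, so clicks of
the sides lift to `Γ`, and the map on classes is a bijection.
-/

open Relation

theorem Relation.EqvGen.map {α β : Type*} {r : α → α → Prop} {s : β → β → Prop} (f : α → β)
    (h : ∀ a b, r a b → EqvGen s (f a) (f b)) {a b : α} (hab : EqvGen r a b) :
    EqvGen s (f a) (f b) := by
  induction hab with
  | rel a b hab => exact h a b hab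
  | refl a => exact .refl _
  | symm a b _ ih => exact .symm _ _ ih
  | trans a b c _ _ ihab ihbc => exact .trans _ _ _ ihab ihbc

namespace AcyclicOrientation

variable {W : Type*} {G : SimpleGraph V} {H : SimpleGraph W}

@[ext]
theorem ext {O O' : AcyclicOrientation G} (h : ∀ a b, O.dir a b ↔ O'.dir a b) : O = O' := by
  cases O; cases O'
  congr
  exact funext₂ fun a b => propext (h a b)

instance (O : AcyclicOrientation G) : IsStrictOrder V (TransGen O.dir) where
  irrefl := O.acyclic
  trans _ _ _ := TransGen.trans

theorem dir_asymm (O : AcyclicOrientation G) {a b : V} (h : O.dir a b) : ¬ O.dir b a :=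
  fun h' => O.acyclic a ((TransGen.single h).tail h')

theorem dir_swap_iff (O : AcyclicOrientation G) {a b : V} :
    O.dir b a ↔ G.Adj a b ∧ ¬ O.dir a b :=
  ⟨fun h => ⟨(O.dir_adj h).symm, O.dir_asymm h⟩, fun ⟨hab, h⟩ => (O.total hab).resolve_left h⟩

theorem ClickAt.unique {O O' O'' : AcyclicOrientation G} {v : V} (h' : O.ClickAt v O')
    (h'' : O.ClickAt v O'') : O' = O'' :=
  ext fun a b => (h'.2 a b).trans (h''.2 a b).symm

/-- Clicking a source `v` makes it a sink, and away from `v` the new orientation is the old one,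
so a directed cycle of the new orientation would be one of `O`. -/
theorem IsSource.exists_clickAt {O : AcyclicOrientation G} {v : V} (hv : O.IsSource v) :
    ∃ O', O.ClickAt v O' := by
  let d : V → V → Prop := fun a b =>
    ((a = v ∨ b = v) ∧ O.dir b a) ∨ (a ≠ v ∧ b ≠ v ∧ O.dir a b)
  have src_ne : ∀ {a b}, d a b → a ≠ v := by
    rintro a b (⟨-, h⟩ | ⟨ha, -, -⟩) rfl
    exacts [hv b h, ha rfl]
  have dir_of_ne : ∀ {a b}, d a b → b ≠ v → O.dir a b := by
    intro a b h hb
    have ha := src_ne h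
    rcases h with ⟨hab, -⟩ | ⟨-, -, h⟩
    exacts [(hab.elim ha hb).elim, h]
  have path_of_ne : ∀ {a b}, TransGen d a b → b ≠ v → TransGen O.dir a b := by
    intro a b h hb
    induction h with
    | single h => exact .single (dir_of_ne h hb)
    | tail _ h ih => exact (ih (src_ne h)).tail (dir_of_ne h hb)
  refine ⟨{ dir := d, dir_adj := ?_, total := ?_, acyclic := ?_ }, hv, fun _ _ => Iff.rfl⟩
  · rintro a b (⟨-, h⟩ | ⟨-, -, h⟩)
    exacts [(O.dir_adj h).symm, O.dir_adj h]
  · intro a b hab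
    by_cases ha : a = v
    · subst ha
      exact Or.inr (Or.inl ⟨Or.inr rfl, (O.total hab).resolve_right (hv b)⟩)
    by_cases hb : b = v
    · subst hb
      exact Or.inl (Or.inl ⟨Or.inr rfl, (O.total hab.symm).resolve_right (hv a)⟩)
    exact (O.total hab).imp (fun h => Or.inr ⟨ha, hb, h⟩) (fun h => Or.inr ⟨hb, ha, h⟩)
  · intro a h
    obtain ⟨b, hab, -⟩ := TransGen.head'_iff.mp h
    exact O.acyclic a (path_of_ne h (src_ne hab))

theorem exists_isSource_mem (O : AcyclicOrientation G) {T : Finset V} (hne : T.Nonempty)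
    (hT : ∀ a ∈ T, ∀ b ∉ T, ¬ O.dir b a) : ∃ v ∈ T, O.IsSource v := by
  obtain ⟨v, hvT, hmin⟩ := (Set.wellFoundedOn_iff.mp
    (T.finite_toSet.wellFoundedOn (r := TransGen O.dir))).has_min T hne
  refine ⟨v, hvT, fun a ha => ?_⟩
  by_cases haT : a ∈ T
  · exact hmin a haT ⟨.single ha, haT, hvT⟩
  · exact hT v hvT a haT ha

/-- Clicking the vertices of `T` one by one, each time at a source of `O` inside `T`,
reverses exactly the edges leaving `T`. -/
theorem exists_reflTransGen_reverse (T : Finset V) (O : AcyclicOrientation G)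
    (hT : ∀ a ∈ T, ∀ b ∉ T, ¬ O.dir b a) :
    ∃ O', ReflTransGen IsClick O O' ∧ ∀ a b, O'.dir a b ↔
      ((a ∈ T ↔ b ∈ T) ∧ O.dir a b) ∨ (¬(a ∈ T ↔ b ∈ T) ∧ O.dir b a) := by
  classical
  induction T using Finset.strongInduction generalizing O with
  | H T ih =>
  rcases T.eq_empty_or_nonempty with rfl | hne
  · exact ⟨O, .refl, by simp⟩
  obtain ⟨v, hvT, hv⟩ := O.exists_isSource_mem hne hT
  obtain ⟨O₁, hO₁⟩ := hv.exists_clickAt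
  have hT₁ : ∀ a ∈ T.erase v, ∀ b ∉ T.erase v, ¬ O₁.dir b a := by
    intro a ha b hb h
    obtain ⟨hav, haT⟩ := Finset.mem_erase.mp ha
    rcases (hO₁.2 b a).mp h with ⟨rfl | rfl, h⟩ | ⟨hbv, -, h⟩
    · exact hv a h
    · exact hav rfl
    · exact hT a haT b (fun hbT => hb (Finset.mem_erase.mpr ⟨hbv, hbT⟩)) h
  obtain ⟨O', hO₁O', hO'⟩ := ih (T.erase v) (T.erase_ssubset hvT) O₁ hT₁
  refine ⟨O', .head ⟨v, hO₁⟩ hO₁O', fun a b => ?_⟩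
  rw [hO', hO₁.2, hO₁.2]
  clear ih hO' hT₁ hO₁O'
  have := O.dir_asymm (a := a) (b := b)
  by_cases ha : a = v <;> by_cases hb : b = v <;> simp_all [Finset.mem_erase] <;> tauto

def comap (O : AcyclicOrientation G) (f : H ↪g G) : AcyclicOrientation H where
  dir a b := O.dir (f a) (f b)
  dir_adj h := f.map_adj_iff.mp (O.dir_adj h)
  total h := O.total (f.map_adj_iff.mpr h)
  acyclic a h := O.acyclic (f a) (h.lift f fun _ _ => id)

@[simp]
theorem comap_dir (O : AcyclicOrientation G) (f : H ↪g G) (a b : W) :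
    (O.comap f).dir a b ↔ O.dir (f a) (f b) := Iff.rfl

theorem ClickAt.comap {O O' : AcyclicOrientation G} (f : H ↪g G) {v : W}
    (h : O.ClickAt (f v) O') : (O.comap f).ClickAt v (O'.comap f) :=
  ⟨fun a => h.1 (f a), fun a b => by
    simpa only [comap_dir, ne_eq, f.inj] using h.2 (f a) (f b)⟩

theorem comap_eq_of_clickAt {O O' : AcyclicOrientation G} (f : H ↪g G) {w : V}
    (h : O.ClickAt w O') (hw : ∀ a, f a ≠ w) : O'.comap f = O.comap f :=
  ext fun a b => by simp [h.2, hw]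

theorem eqvGen_comap (f : H ↪g G) {O O' : AcyclicOrientation G} (h : EqvGen IsClick O O') :
    EqvGen IsClick (O.comap f) (O'.comap f) := by
  refine h.map (comap · f) fun O O' ⟨w, hw⟩ => ?_
  by_cases hw' : ∃ v, f v = w
  · obtain ⟨v, rfl⟩ := hw'
    exact .rel _ _ ⟨v, hw.comap f⟩
  · rw [comap_eq_of_clickAt f hw (not_exists.mp hw')]
    exact .refl _

end AcyclicOrientation

structure IsBridgeJoin {V₁ V₂ : Type*} (G : SimpleGraph (V₁ ⊕ V₂)) (G₁ : SimpleGraph V₁)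
    (G₂ : SimpleGraph V₂) (x : V₁) (y : V₂) : Prop where
  adj_inl_inl : ∀ a b, G.Adj (Sum.inl a) (Sum.inl b) ↔ G₁.Adj a b
  adj_inr_inr : ∀ a b, G.Adj (Sum.inr a) (Sum.inr b) ↔ G₂.Adj a b
  adj_inl_inr : ∀ a b, G.Adj (Sum.inl a) (Sum.inr b) ↔ (a = x ∧ b = y)

namespace IsBridgeJoin

open AcyclicOrientation Sum

variable {V₁ V₂ : Type*} {G : SimpleGraph (V₁ ⊕ V₂)} {G₁ : SimpleGraph V₁} {G₂ : SimpleGraph V₂}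
  {x : V₁} {y : V₂} (hG : IsBridgeJoin G G₁ G₂ x y)

def embInl : G₁ ↪g G := ⟨Function.Embedding.inl, hG.adj_inl_inl _ _⟩

def embInr : G₂ ↪g G := ⟨Function.Embedding.inr, hG.adj_inr_inr _ _⟩

@[simp]
theorem embInl_apply (a : V₁) : hG.embInl a = inl a := rfl

@[simp]
theorem embInr_apply (b : V₂) : hG.embInr b = inr b := rfl

def glue (O₁ : AcyclicOrientation G₁) (O₂ : AcyclicOrientation G₂) : AcyclicOrientation G where
  dir a b := G.Adj a b ∧ Lex O₁.dir O₂.dir a b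
  dir_adj h := h.1
  total {a b} h := by
    rcases a with a | a <;> rcases b with b | b
    · exact (O₁.total ((hG.adj_inl_inl a b).mp h)).imp (⟨h, .inl ·⟩) (⟨h.symm, .inl ·⟩)
    · exact .inl ⟨h, .sep a b⟩
    · exact .inr ⟨h.symm, .sep b a⟩
    · exact (O₂.total ((hG.adj_inr_inr a b).mp h)).imp (⟨h, .inr ·⟩) (⟨h.symm, .inr ·⟩)
  acyclic a h := by
    have h' := TransGen.mono (p := Lex (TransGen O₁.dir) (TransGen O₂.dir))
      (fun _ _ hab => hab.2.mono (fun _ _ => .single) (fun _ _ => .single)) _ _ h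
    rw [transGen_eq_self] at h'
    exact irrefl a h'

theorem comap_embInl_glue (O₁ : AcyclicOrientation G₁) (O₂ : AcyclicOrientation G₂) :
    (hG.glue O₁ O₂).comap hG.embInl = O₁ :=
  ext fun a b => ⟨fun h => lex_inl_inl.mp h.2,
    fun h => ⟨(hG.adj_inl_inl a b).mpr (O₁.dir_adj h), .inl h⟩⟩

theorem comap_embInr_glue (O₁ : AcyclicOrientation G₁) (O₂ : AcyclicOrientation G₂) :
    (hG.glue O₁ O₂).comap hG.embInr = O₂ :=
  ext fun a b => ⟨fun h => lex_inr_inr.mp h.2,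
    fun h => ⟨(hG.adj_inr_inr a b).mpr (O₂.dir_adj h), .inr h⟩⟩

theorem glue_dir_inl_inr (O₁ : AcyclicOrientation G₁) (O₂ : AcyclicOrientation G₂) :
    (hG.glue O₁ O₂).dir (inl x) (inr y) :=
  ⟨(hG.adj_inl_inr x y).mpr ⟨rfl, rfl⟩, .sep x y⟩

theorem eq_of_comap_eq {O O' : AcyclicOrientation G}
    (h₁ : O.comap hG.embInl = O'.comap hG.embInl) (h₂ : O.comap hG.embInr = O'.comap hG.embInr)
    (hxy : O.dir (inl x) (inr y) ↔ O'.dir (inl x) (inr y)) : O = O' := by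
  have cross : ∀ a b, O.dir (inl a) (inr b) ↔ O'.dir (inl a) (inr b) := by
    intro a b
    by_cases hab : G.Adj (inl a) (inr b)
    · obtain ⟨rfl, rfl⟩ := (hG.adj_inl_inr a b).mp hab
      exact hxy
    · exact iff_of_false (fun h => hab (O.dir_adj h)) (fun h => hab (O'.dir_adj h))
  ext a b
  rcases a with a | a <;> rcases b with b | b
  · exact Iff.of_eq (congrArg (·.dir a b) h₁)
  · exact cross a b
  · rw [O.dir_swap_iff, O'.dir_swap_iff, cross]
  · exact Iff.of_eq (congrArg (·.dir a b) h₂)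

theorem exists_reflTransGen_flip [Fintype V₁] [Fintype V₂] (O : AcyclicOrientation G) :
    ∃ O', ReflTransGen IsClick O O' ∧ O'.comap hG.embInl = O.comap hG.embInl ∧
      O'.comap hG.embInr = O.comap hG.embInr ∧
      (O'.dir (inl x) (inr y) ↔ ¬ O.dir (inl x) (inr y)) := by
  classical
  set p := O.dir (inl x) (inr y)
  -- the side containing the tail of the bridge
  let T : Finset (V₁ ⊕ V₂) := Finset.univ.filter fun z => (z.isLeft ↔ p)
  have hT : ∀ a ∈ T, ∀ b ∉ T, ¬ O.dir b a := by
    intro a ha b hb h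
    have hab := O.dir_adj h
    rcases a with a | a <;> rcases b with b | b
    · exact hb (by simpa [T] using ha)
    · obtain ⟨rfl, rfl⟩ := (hG.adj_inl_inr a b).mp hab.symm
      exact O.dir_asymm (by simpa [T] using ha) h
    · obtain ⟨rfl, rfl⟩ := (hG.adj_inl_inr b a).mp hab
      exact (by simpa [T] using ha : ¬p) h
    · exact hb (by simpa [T] using ha)
  obtain ⟨O', hOO', hO'⟩ := O.exists_reflTransGen_reverse T hT
  refine ⟨O', hOO', ext fun a b => ?_, ext fun a b => ?_, ?_⟩
  · simp [hO', T]
  · simp [hO', T]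
  · simp only [hO', T, Finset.mem_filter, Finset.mem_univ, true_and, isLeft_inl, isLeft_inr,
      true_iff, Bool.false_eq_true, false_iff, iff_not_self, false_and, not_false_eq_true, false_or]
    exact O.dir_swap_iff.trans (and_iff_right ((hG.adj_inl_inr x y).mpr ⟨rfl, rfl⟩))

theorem reflTransGen_of_comap_eq [Fintype V₁] [Fintype V₂] {O O' : AcyclicOrientation G}
    (h₁ : O.comap hG.embInl = O'.comap hG.embInl) (h₂ : O.comap hG.embInr = O'.comap hG.embInr) :
    ReflTransGen IsClick O O' := by
  by_cases hxy : O.dir (inl x) (inr y) ↔ O'.dir (inl x) (inr y)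
  · rw [hG.eq_of_comap_eq h₁ h₂ hxy]
  · obtain ⟨O'', hOO'', h₁'', h₂'', hxy''⟩ := hG.exists_reflTransGen_flip O
    rwa [hG.eq_of_comap_eq (h₁''.trans h₁) (h₂''.trans h₂) (by tauto)] at hOO''

theorem eqvGen_glue_comap [Fintype V₁] [Fintype V₂] (O : AcyclicOrientation G) :
    EqvGen IsClick O (hG.glue (O.comap hG.embInl) (O.comap hG.embInr)) :=
  EqvGen.reflTransGen_le_eqvGen _ _ _ <|
    hG.reflTransGen_of_comap_eq (hG.comap_embInl_glue _ _).symm (hG.comap_embInr_glue _ _).symm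

theorem eqvGen_glue_of_clickAt [Fintype V₁] [Fintype V₂] {O O' : AcyclicOrientation G}
    {w : V₁ ⊕ V₂} (h : O.ClickAt w O') :
    EqvGen IsClick (hG.glue (O.comap hG.embInl) (O.comap hG.embInr))
      (hG.glue (O'.comap hG.embInl) (O'.comap hG.embInr)) :=
  .trans _ _ _ (.symm _ _ (hG.eqvGen_glue_comap O))
    (.trans _ _ _ (.rel _ _ ⟨w, h⟩) (hG.eqvGen_glue_comap O'))

theorem eqvGen_glue_of_isClick_left [Fintype V₁] [Fintype V₂] {O₁ O₁' : AcyclicOrientation G₁}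
    (O₂ : AcyclicOrientation G₂) (h : O₁.IsClick O₁') :
    EqvGen IsClick (hG.glue O₁ O₂) (hG.glue O₁' O₂) := by
  obtain ⟨v, hv⟩ := h
  have hsrc : (hG.glue O₁ O₂).IsSource (inl v) := by
    rintro (a | a) h
    · exact hv.1 a (lex_inl_inl.mp h.2)
    · exact lex_inr_inl h.2
  obtain ⟨O', hO'⟩ := hsrc.exists_clickAt
  have h₁ : O'.comap hG.embInl = O₁' := by
    have h := hO'.comap hG.embInl
    rw [comap_embInl_glue] at h
    exact h.unique hv
  have h₂ : O'.comap hG.embInr = O₂ :=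
    (comap_eq_of_clickAt _ hO' fun _ => inr_ne_inl).trans (hG.comap_embInr_glue _ _)
  simpa [comap_embInl_glue, comap_embInr_glue, h₁, h₂] using hG.eqvGen_glue_of_clickAt hO'

theorem eqvGen_glue_of_isClick_right [Fintype V₁] [Fintype V₂] (O₁ : AcyclicOrientation G₁)
    {O₂ O₂' : AcyclicOrientation G₂} (h : O₂.IsClick O₂') :
    EqvGen IsClick (hG.glue O₁ O₂) (hG.glue O₁ O₂') := by
  obtain ⟨v, hv⟩ := h
  obtain ⟨O, -, h₁, h₂, hxy⟩ := hG.exists_reflTransGen_flip (hG.glue O₁ O₂)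
  rw [comap_embInl_glue] at h₁
  rw [comap_embInr_glue] at h₂
  have hsrc : O.IsSource (inr v) := by
    rintro (a | a) h
    · obtain ⟨rfl, rfl⟩ := (hG.adj_inl_inr a v).mp (O.dir_adj h)
      exact hxy.mp h (hG.glue_dir_inl_inr O₁ O₂)
    · exact hv.1 a (by rw [← h₂]; exact h)
  obtain ⟨O', hO'⟩ := hsrc.exists_clickAt
  have h₂' : O'.comap hG.embInr = O₂' := by
    have h := hO'.comap hG.embInr
    rw [h₂] at h
    exact h.unique hv
  have h₁' : O'.comap hG.embInl = O₁ := (comap_eq_of_clickAt _ hO' fun _ => inl_ne_inr).trans h₁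
  simpa [h₁, h₂, h₁', h₂'] using hG.eqvGen_glue_of_clickAt hO'

theorem eqvGen_glue [Fintype V₁] [Fintype V₂] {O₁ O₁' : AcyclicOrientation G₁}
    {O₂ O₂' : AcyclicOrientation G₂} (h₁ : EqvGen IsClick O₁ O₁') (h₂ : EqvGen IsClick O₂ O₂') :
    EqvGen IsClick (hG.glue O₁ O₂) (hG.glue O₁' O₂') :=
  .trans _ _ _ (h₁.map (hG.glue · O₂) fun _ _ h => hG.eqvGen_glue_of_isClick_left O₂ h)
    (h₂.map (hG.glue O₁' ·) fun _ _ h => hG.eqvGen_glue_of_isClick_right O₁' h)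

def restrictClass :
    Quotient (clickSetoid G) → Quotient (clickSetoid G₁) × Quotient (clickSetoid G₂) :=
  Quotient.lift (fun O => (Quotient.mk _ (O.comap hG.embInl), Quotient.mk _ (O.comap hG.embInr)))
    fun _ _ h => Prod.ext (Quotient.sound (eqvGen_comap _ h)) (Quotient.sound (eqvGen_comap _ h))

theorem restrictClass_bijective [Fintype V₁] [Fintype V₂] : hG.restrictClass.Bijective := by
  refine ⟨?_, ?_⟩
  · rintro ⟨O⟩ ⟨O'⟩ h
    obtain ⟨h₁, h₂⟩ := Prod.ext_iff.mp h
    exact Quotient.sound (.trans _ _ _ (hG.eqvGen_glue_comap O)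
      (.trans _ _ _ (hG.eqvGen_glue (Quotient.exact h₁) (Quotient.exact h₂))
        (.symm _ _ (hG.eqvGen_glue_comap O'))))
  · rintro ⟨⟨O₁⟩, ⟨O₂⟩⟩
    exact ⟨Quotient.mk _ (hG.glue O₁ O₂), by
      rw [restrictClass, Quotient.lift_mk, comap_embInl_glue, comap_embInr_glue]
      rfl⟩

end IsBridgeJoin

/-- If `Γ` is the union of `Γ₁` and `Γ₂` joined by a bridge `e = {x,y}`, then
`κ(Γ) = κ(Γ₁)·κ(Γ₂)`. -/
theorem kappa_bridge_mul {V₁ V₂ : Type*} [Fintype V₁] [Fintype V₂]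
    (G₁ : SimpleGraph V₁) (G₂ : SimpleGraph V₂) (x : V₁) (y : V₂)
    (G : SimpleGraph (V₁ ⊕ V₂))
    (h11 : ∀ a b, G.Adj (Sum.inl a) (Sum.inl b) ↔ G₁.Adj a b)
    (h22 : ∀ a b, G.Adj (Sum.inr a) (Sum.inr b) ↔ G₂.Adj a b)
    (h12 : ∀ a b, G.Adj (Sum.inl a) (Sum.inr b) ↔ (a = x ∧ b = y)) :
    kappa G = kappa G₁ * kappa G₂ := by
  have hG : IsBridgeJoin G G₁ G₂ x y := ⟨h11, h22, h12⟩
  rw [kappa, kappa, kappa, ← Nat.card_prod]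
  exact Nat.card_congr (Equiv.ofBijective _ hG.restrictClass_bijective)
end

section
/- Let Γ be a finite simple graph with a directed edge (v,w) in an acyclic orientation O, and let c be a click-sequence applicable to O. Then between any two consecutive occurrences of v in c there is exactly one occurrence of w, and w cannot occur before the first occurrence of v. -/
variable {V : Type*}

open AcyclicOrientation

/-!
Clicking a vertex reverses exactly the edges at that vertex, and only a source may be clicked.
Hence the edge between `v` and `w` always points away from whichever of the two was clicked
last (from `v` if neither was), and each of them can only be clicked while the edge points away
from it. So the clicks of `v` and `w` alternate, starting with `v`: every prefix of the click
sequence contains as many `v`s as `w`s, or one more, and both claims are read off from these counts.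
-/

namespace List

variable {α : Type*} [DecidableEq α]

/-- The occurrences of `v` and `w` in `l` alternate, starting with `v`. -/
def Alternates (v w : α) (l : List α) : Prop :=
  ∀ n, (l.take n).count w ≤ (l.take n).count v ∧ (l.take n).count v ≤ (l.take n).count w + 1

theorem count_take_add_one (l : List α) (x : α) {j : ℕ} (hj : j < l.length) :
    (l.take (j + 1)).count x = (l.take j).count x + if l[j] = x then 1 else 0 := by
  rw [take_add_one, getElem?_eq_getElem hj, Option.toList_some, count_append, count_singleton']

theorem count_take_mono (l : List α) (x : α) {m n : ℕ} (hmn : m ≤ n) :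
    (l.take m).count x ≤ (l.take n).count x :=
  ((take_prefix_take_left hmn).sublist).count_le x

theorem exists_getElem_eq_of_count_take_lt {l : List α} {x : α} {a b : ℕ}
    (h : (l.take a).count x < (l.take b).count x) :
    ∃ (j : ℕ) (hj : j < l.length), a ≤ j ∧ j < b ∧ l[j] = x := by
  induction b with
  | zero => simp at h
  | succ b ih =>
    by_cases hb : b < l.length
    · rw [count_take_add_one l x hb] at h
      by_cases hx : l[b] = x
      · refine ⟨b, hb, ?_, b.lt_succ_self, hx⟩
        by_contra! hba
        have := count_take_mono l x (by omega : b + 1 ≤ a)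
        rw [count_take_add_one l x hb, if_pos hx] at this
        rw [if_pos hx] at h
        omega
      · rw [if_neg hx, add_zero] at h
        obtain ⟨j, hj, haj, hjb, hjx⟩ := ih h
        exact ⟨j, hj, haj, hjb.trans b.lt_succ_self, hjx⟩
    · have htake : l.take (b + 1) = l.take b := by
        rw [take_of_length_le (by omega), take_of_length_le (by omega)]
      rw [htake] at h
      obtain ⟨j, hj, haj, hjb, hjx⟩ := ih h
      exact ⟨j, hj, haj, hjb.trans b.lt_succ_self, hjx⟩

theorem count_take_add_two_le {l : List α} {x : α} {a i j b : ℕ} (hai : a ≤ i) (hij : i < j)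
    (hjb : j < b) (hj : j < l.length) (hix : l[i] = x) (hjx : l[j] = x) :
    (l.take a).count x + 2 ≤ (l.take b).count x := by
  have hi_succ := count_take_add_one l x (hij.trans hj)
  have hj_succ := count_take_add_one l x hj
  rw [if_pos hix] at hi_succ
  rw [if_pos hjx] at hj_succ
  have := count_take_mono l x hai
  have := count_take_mono l x (by omega : i + 1 ≤ j)
  have := count_take_mono l x (by omega : j + 1 ≤ b)
  omega

namespace Alternates

variable {v w : α} {l : List α}

theorem count_take_eq_of_getElem_eq_left (h : l.Alternates v w) (hvw : v ≠ w) {i : ℕ}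
    (hi : i < l.length) (hiv : l[i] = v) : (l.take i).count w = (l.take i).count v := by
  have hv := count_take_add_one l v hi
  have hw := count_take_add_one l w hi
  rw [if_pos hiv] at hv
  rw [hiv, if_neg hvw] at hw
  have := h i
  have := h (i + 1)
  omega

theorem exists_lt_get_eq_left (h : l.Alternates v w) (hvw : v ≠ w) (j : Fin l.length)
    (hjw : l.get j = w) : ∃ i : Fin l.length, i < j ∧ l.get i = v := by
  rw [get_eq_getElem] at hjw
  have hv := count_take_add_one l v j.isLt
  have hw := count_take_add_one l w j.isLt
  rw [hjw, if_neg hvw.symm] at hv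
  rw [if_pos hjw] at hw
  have hpos : (l.take 0).count v < (l.take j).count v := by
    have := h (j + 1)
    simp only [take_zero, count_nil]
    omega
  obtain ⟨i, hi, -, hij, hiv⟩ := exists_getElem_eq_of_count_take_lt hpos
  exact ⟨⟨i, hi⟩, hij, hiv⟩

theorem existsUnique_get_eq_right_between (h : l.Alternates v w) (hvw : v ≠ w)
    (i₁ i₂ : Fin l.length) (hi₁₂ : i₁ < i₂) (hv₁ : l.get i₁ = v) (hv₂ : l.get i₂ = v)
    (hbetween : ∀ k : Fin l.length, i₁ < k → k < i₂ → l.get k ≠ v) :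
    ∃! j : Fin l.length, i₁ < j ∧ j < i₂ ∧ l.get j = w := by
  rw [get_eq_getElem] at hv₁ hv₂
  have hv_succ := count_take_add_one l v i₁.isLt
  have hw_succ := count_take_add_one l w i₁.isLt
  rw [if_pos hv₁] at hv_succ
  rw [hv₁, if_neg hvw] at hw_succ
  have h₁ := h.count_take_eq_of_getElem_eq_left hvw i₁.isLt hv₁
  have h₂ := h.count_take_eq_of_getElem_eq_left hvw i₂.isLt hv₂
  have hv_const : (l.take i₂).count v ≤ (l.take (i₁ + 1)).count v := by
    by_contra! hlt
    obtain ⟨k, hk, hik, hki, hkv⟩ := exists_getElem_eq_of_count_take_lt hlt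
    exact hbetween ⟨k, hk⟩ hik hki hkv
  have hw_lt : (l.take (i₁ + 1)).count w < (l.take i₂).count w := by
    have := count_take_mono l v (show (i₁ : ℕ) + 1 ≤ i₂ from hi₁₂)
    omega
  obtain ⟨j, hj, hij, hji, hjw⟩ := exists_getElem_eq_of_count_take_lt hw_lt
  refine ⟨⟨j, hj⟩, ⟨hij, hji, hjw⟩, ?_⟩
  rintro ⟨k, hk⟩ ⟨hik, hki, hkw⟩
  change (i₁ : ℕ) < k at hik
  change k < (i₂ : ℕ) at hki
  change l[k] = w at hkw
  rcases lt_trichotomy k j with hkj | rfl | hjk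
  · have := count_take_add_two_le (a := i₁ + 1) hik hkj hji hj hkw hjw
    omega
  · rfl
  · have := count_take_add_two_le (a := i₁ + 1) hij hjk hki hk hjw hkw
    omega

end Alternates

end List

namespace AcyclicOrientation

variable {G : SimpleGraph V} {O O' : AcyclicOrientation G} {u v w : V}

theorem ClickAt.ne_of_dir (hu : O.ClickAt u O') (hvw : O.dir v w) : u ≠ w :=
  fun huw => hu.1 v (huw ▸ hvw)

theorem ClickAt.dir_swap (hv : O.ClickAt v O') (hvw : O.dir v w) : O'.dir w v :=
  (hv.2 w v).2 (Or.inl ⟨Or.inr rfl, hvw⟩)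

theorem ClickAt.dir_of_ne (hu : O.ClickAt u O') (hvw : O.dir v w) (hv : u ≠ v) (hw : u ≠ w) :
    O'.dir v w :=
  (hu.2 v w).2 (Or.inr ⟨hv.symm, hw.symm, hvw⟩)

theorem ClickSeq.alternates [DecidableEq V] {O₂ : AcyclicOrientation G} {c : List V}
    (h : ClickSeq O c O₂) (hvw : O.dir v w) : c.Alternates v w := by
  induction h generalizing v w with
  | nil => simp [List.Alternates]
  | @cons O O' _ u c hu _ ih =>
    rintro (_ | n)
    · simp
    have huw := hu.ne_of_dir hvw
    rw [List.take_succ_cons, List.count_cons, List.count_cons]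
    by_cases huv : u = v
    · subst huv
      have := ih (hu.dir_swap hvw) n
      simp only [beq_iff_eq, huw, ↓reduceIte, add_zero, BEq.rfl, add_le_add_iff_right]
      omega
    · have := ih (hu.dir_of_ne hvw huv huw) n
      simp only [beq_iff_eq, huw, ↓reduceIte, add_zero, huv]
      omega

end AcyclicOrientation

theorem edge_occurrences_in_click_sequence_general (G : SimpleGraph V)
    (v w : V) (O O₂ : AcyclicOrientation G) (hd : O.dir v w)
    (c : List V) (h : ClickSeq O c O₂) :
    (∀ j : Fin c.length, c.get j = w → ∃ i : Fin c.length, i < j ∧ c.get i = v) ∧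
    (∀ i₁ i₂ : Fin c.length, i₁ < i₂ → c.get i₁ = v → c.get i₂ = v →
      (∀ k : Fin c.length, i₁ < k → k < i₂ → c.get k ≠ v) →
      ∃! j : Fin c.length, i₁ < j ∧ j < i₂ ∧ c.get j = w) := by
  classical
  have hvw : v ≠ w := (O.dir_adj hd).ne
  have hc := h.alternates hd
  exact ⟨hc.exists_lt_get_eq_left hvw, hc.existsUnique_get_eq_right_between hvw⟩

/-- For a directed edge `(v,w)` of `O`: in any click-sequence, `w` never occurs before the first
occurrence of `v`, and between two consecutive occurrences of `v` there is exactly one `w`. -/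
theorem edge_occurrences_in_click_sequence [Fintype V] (G : SimpleGraph V)
    (v w : V) (O O₂ : AcyclicOrientation G) (hd : O.dir v w)
    (c : List V) (h : ClickSeq O c O₂) :
    (∀ j : Fin c.length, c.get j = w → ∃ i : Fin c.length, i < j ∧ c.get i = v) ∧
    (∀ i₁ i₂ : Fin c.length, i₁ < i₂ → c.get i₁ = v → c.get i₂ = v →
      (∀ k : Fin c.length, i₁ < k → k < i₂ → c.get k ≠ v) →
      ∃! j : Fin c.length, i₁ < j ∧ j < i₂ ∧ c.get j = w) :=
  edge_occurrences_in_click_sequence_general G v w O O₂ hd c h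
end
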